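/- arXiv:math-ph/0406017 — 7 statements merged into one kernel-verified Lean document; each statement's English description precedes it below -/
import Mathlib

section
/- Let N ≥ 4 and ℓ > 0. For every equilateral closed polygon y : ℤ/Nℤ → ℝ² with edge length ℓ, the total length of the 2-diagonals satisfies ∑_{i=1}^N |y_i − y_{i+2}| ≤ 2Nℓ cos(π/N). -/
/-!
Write `z i = y (i + 1) - y i` for the edges: they have length `ℓ` and sum to zero, and the
`2`-diagonals are `‖z i + z (i + 1)‖`. By Cauchy–Schwarz the square of the total diagonal length is
at most `2N (∑ ‖z i‖² + ∑ ⟪z i, z (i + 1)⟫)`. For a mean-zero sequence on `ℤ/Nℤ` the shift acts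
on the `k`-th Fourier mode by `e^{2πik/N}` and the mode `k = 0` vanishes, which gives the discrete
Wirtinger inequality `∑ ⟪z i, z (i + 1)⟫ ≤ cos (2π/N) ∑ ‖z i‖²`; finally
`1 + cos (2π/N) = 2 cos² (π/N)`.
-/

open Real ZMod ComplexConjugate
open scoped InnerProductSpace

lemma Real.cos_le_cos_of_le_of_le_two_pi_sub {δ x : ℝ} (hδ : 0 ≤ δ) (hδx : δ ≤ x)
    (hx : x ≤ 2 * π - δ) : cos x ≤ cos δ := by
  rcases le_total x π with hxπ | hπx
  · exact cos_le_cos_of_nonneg_of_le_pi hδ hxπ hδx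
  · rw [← cos_two_pi_sub x]
    exact cos_le_cos_of_nonneg_of_le_pi hδ (by linarith) (by linarith)

namespace ZMod

variable {N : ℕ} [NeZero N]

lemma sum_stdAddChar_mul_right (b : ZMod N) :
    ∑ k : ZMod N, stdAddChar (k * b) = if b = 0 then (N : ℂ) else 0 := by
  simpa [ZMod.card] using AddChar.sum_mulShift b (isPrimitive_stdAddChar N)

lemma re_stdAddChar_le_cos (hN : 2 ≤ N) {a : ZMod N} (ha : a ≠ 0) :
    (stdAddChar a).re ≤ cos (2 * π / N) := by
  rw [stdAddChar_apply, toCircle_eq_circleExp, Circle.coe_exp, Complex.exp_ofReal_mul_I_re,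
    show 2 * π * (a.val / N : ℝ) = 2 * π / N * a.val by ring]
  have h1 : (1 : ℝ) ≤ a.val := by exact_mod_cast Nat.one_le_iff_ne_zero.mpr ((val_ne_zero a).mpr ha)
  have h2 : (a.val : ℝ) + 1 ≤ N := by exact_mod_cast a.val_lt
  apply cos_le_cos_of_le_of_le_two_pi_sub (by positivity)
    (le_mul_of_one_le_right (by positivity) h1)
  calc 2 * π / N * a.val ≤ 2 * π / N * (N - 1) := by gcongr; linarith
    _ = 2 * π - 2 * π / N := by field_simp

/-- The power spectrum `|𝓕 z|²` is the Fourier transform of the autocorrelation of `z`. -/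
lemma sum_stdAddChar_mul_conj_dft_mul_dft (z : ZMod N → ℂ) (m : ZMod N) :
    ∑ k, stdAddChar (m * k) * (conj (𝓕 z k) * 𝓕 z k) = N * ∑ j, conj (z j) * z (j + m) := by
  calc ∑ k, stdAddChar (m * k) * (conj (𝓕 z k) * 𝓕 z k)
      = ∑ j, ∑ l, conj (z j) * z l * ∑ k, stdAddChar (k * (j + m - l)) := by
        simp_rw [dft_apply, smul_eq_mul, map_sum, map_mul, ← AddChar.map_neg_eq_conj, neg_neg,
          Finset.sum_mul_sum, Finset.mul_sum]
        rw [Finset.sum_comm]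
        refine Finset.sum_congr rfl fun j _ => ?_
        rw [Finset.sum_comm]
        refine Finset.sum_congr rfl fun l _ => Finset.sum_congr rfl fun k _ => ?_
        rw [show k * (j + m - l) = m * k + j * k + -(l * k) by ring, AddChar.map_add_eq_mul,
          AddChar.map_add_eq_mul]
        ring
    _ = N * ∑ j, conj (z j) * z (j + m) := by
        simp_rw [sum_stdAddChar_mul_right, sub_eq_zero, mul_ite, mul_zero, Finset.sum_ite_eq,
          Finset.mem_univ, if_true, Finset.mul_sum, mul_comm]

lemma sum_re_stdAddChar_mul_norm_dft_sq (x : ZMod N → ℝ) (m : ZMod N) :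
    ∑ k, (stdAddChar (m * k)).re * ‖𝓕 (fun j => (x j : ℂ)) k‖ ^ 2 = N * ∑ j, x j * x (j + m) := by
  have h := congrArg Complex.re (sum_stdAddChar_mul_conj_dft_mul_dft (fun j => (x j : ℂ)) m)
  rw [← Complex.ofReal_natCast, Complex.re_ofReal_mul] at h
  simpa only [Complex.conj_mul', ← Complex.ofReal_pow, Complex.re_sum, Complex.re_mul_ofReal,
    Complex.conj_ofReal, ← Complex.ofReal_mul, Complex.ofReal_re] using h

theorem sum_mul_add_one_le (hN : 2 ≤ N) (x : ZMod N → ℝ) (hx : ∑ j, x j = 0) :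
    ∑ j, x j * x (j + 1) ≤ cos (2 * π / N) * ∑ j, x j ^ 2 := by
  set X := 𝓕 (fun j => (x j : ℂ))
  have parseval : ∑ k, ‖X k‖ ^ 2 = N * ∑ j, x j ^ 2 := by
    simpa [sq] using sum_re_stdAddChar_mul_norm_dft_sq x 0
  have hX0 : X 0 = 0 := by
    simp only [X, dft_apply_zero, ← Complex.ofReal_sum, hx, Complex.ofReal_zero]
  refine le_of_mul_le_mul_left ?_ (by positivity : (0 : ℝ) < N)
  calc N * ∑ j, x j * x (j + 1) = ∑ k, (stdAddChar (1 * k)).re * ‖X k‖ ^ 2 :=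
        (sum_re_stdAddChar_mul_norm_dft_sq x 1).symm
    _ ≤ ∑ k, cos (2 * π / N) * ‖X k‖ ^ 2 := by
        refine Finset.sum_le_sum fun k _ => ?_
        rcases eq_or_ne k 0 with rfl | hk
        · simp [hX0]
        · rw [one_mul]
          gcongr
          exact re_stdAddChar_le_cos hN hk
    _ = N * (cos (2 * π / N) * ∑ j, x j ^ 2) := by
        rw [← Finset.mul_sum, parseval]
        ring

theorem sum_inner_add_one_le {E : Type*} [NormedAddCommGroup E] [InnerProductSpace ℝ E]
    [FiniteDimensional ℝ E] (hN : 2 ≤ N) (z : ZMod N → E) (hz : ∑ j, z j = 0) :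
    ∑ j, ⟪z j, z (j + 1)⟫_ℝ ≤ cos (2 * π / N) * ∑ j, ‖z j‖ ^ 2 := by
  let b := stdOrthonormalBasis ℝ E
  calc ∑ j, ⟪z j, z (j + 1)⟫_ℝ = ∑ i, ∑ j, ⟪b i, z j⟫_ℝ * ⟪b i, z (j + 1)⟫_ℝ := by
        rw [Finset.sum_comm]
        refine Finset.sum_congr rfl fun j _ => ?_
        rw [← b.sum_inner_mul_inner]
        exact Finset.sum_congr rfl fun i _ => by rw [real_inner_comm (b i) (z j)]
    _ ≤ ∑ i, cos (2 * π / N) * ∑ j, ⟪b i, z j⟫_ℝ ^ 2 :=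
        Finset.sum_le_sum fun i _ =>
          sum_mul_add_one_le hN _ (by rw [← inner_sum, hz, inner_zero_right])
    _ = cos (2 * π / N) * ∑ j, ‖z j‖ ^ 2 := by
        rw [← Finset.mul_sum, Finset.sum_comm]
        simp only [b.sum_sq_inner_right]

end ZMod

lemma sq_sum_norm_add_add_one_le {E : Type*} [NormedAddCommGroup E] [InnerProductSpace ℝ E]
    {N : ℕ} [NeZero N] (z : ZMod N → E) :
    (∑ j, ‖z j + z (j + 1)‖) ^ 2 ≤ 2 * N * (∑ j, ‖z j‖ ^ 2 + ∑ j, ⟪z j, z (j + 1)⟫_ℝ) := by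
  have hshift : ∑ j, ‖z (j + 1)‖ ^ 2 = ∑ j, ‖z j‖ ^ 2 :=
    Equiv.sum_comp (Equiv.addRight 1) (fun j => ‖z j‖ ^ 2)
  calc (∑ j, ‖z j + z (j + 1)‖) ^ 2 ≤ N * ∑ j, ‖z j + z (j + 1)‖ ^ 2 := by
        simpa [ZMod.card] using sq_sum_le_card_mul_sum_sq (s := Finset.univ)
          (f := fun j => ‖z j + z (j + 1)‖)
    _ = 2 * N * (∑ j, ‖z j‖ ^ 2 + ∑ j, ⟪z j, z (j + 1)⟫_ℝ) := by
        simp_rw [norm_add_sq_real, Finset.sum_add_distrib, ← Finset.mul_sum, hshift]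
        ring

theorem sum_dist_add_two_le {E : Type*} [NormedAddCommGroup E] [InnerProductSpace ℝ E]
    [FiniteDimensional ℝ E] {N : ℕ} [NeZero N] (hN : 2 ≤ N) {ℓ : ℝ} (y : ZMod N → E)
    (hy : ∀ i, dist (y (i + 1)) (y i) = ℓ) :
    ∑ i, dist (y i) (y (i + 2)) ≤ 2 * N * ℓ * cos (π / N) := by
  set z : ZMod N → E := fun i => y (i + 1) - y i
  have hz_sum : ∑ i, z i = 0 := by
    rw [Finset.sum_sub_distrib, sub_eq_zero]
    exact Equiv.sum_comp (Equiv.addRight 1) y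
  have hz_norm : ∑ i, ‖z i‖ ^ 2 = N * ℓ ^ 2 := by
    simp [z, ← dist_eq_norm, hy, ZMod.card]
  have hdiag : ∀ i, dist (y i) (y (i + 2)) = ‖z i + z (i + 1)‖ := fun i => by
    rw [dist_comm, dist_eq_norm, show i + 2 = i + 1 + 1 by ring]
    exact congrArg norm (sub_add_sub_cancel' _ _ _).symm
  have hℓ : 0 ≤ ℓ := hy 0 ▸ dist_nonneg
  have hcos : 0 ≤ cos (π / N) := by
    have h2 : (2 : ℝ) ≤ N := by exact_mod_cast hN
    exact cos_nonneg_of_mem_Icc ⟨(neg_nonpos.mpr (by positivity)).trans (by positivity),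
      div_le_div_of_nonneg_left pi_pos.le two_pos h2⟩
  rw [Finset.sum_congr rfl fun i _ => hdiag i]
  refine (pow_le_pow_iff_left₀ (by positivity) (by positivity) two_ne_zero).mp ?_
  calc (∑ i, ‖z i + z (i + 1)‖) ^ 2 ≤ 2 * N * (∑ i, ‖z i‖ ^ 2 + ∑ i, ⟪z i, z (i + 1)⟫_ℝ) :=
        sq_sum_norm_add_add_one_le z
    _ ≤ 2 * N * (∑ i, ‖z i‖ ^ 2 + cos (2 * π / N) * ∑ i, ‖z i‖ ^ 2) := by
        gcongr
        exact ZMod.sum_inner_add_one_le hN z hz_sum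
    _ = (2 * N * ℓ * cos (π / N)) ^ 2 := by
        rw [hz_norm, mul_pow, cos_sq, show 2 * (π / N) = 2 * π / N by ring]
        ring

theorem total_two_diagonal_length_le_general (N : ℕ) [NeZero N] (hN : 4 ≤ N) (ℓ : ℝ)
    (y : ZMod N → EuclideanSpace ℝ (Fin 2))
    (hy : ∀ i, dist (y (i + 1)) (y i) = ℓ) :
    ∑ i : ZMod N, dist (y i) (y (i + 2)) ≤ 2 * N * ℓ * Real.cos (Real.pi / N) :=
  sum_dist_add_two_le (by omega) y hy

/-- Let `N ≥ 4` and `ℓ > 0`. For every equilateral closed polygon `y : ℤ/Nℤ → ℝ²` with edge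
length `ℓ`, the total length of the `2`-diagonals satisfies
`∑_i |y_i − y_{i+2}| ≤ 2Nℓ cos(π/N)`. -/
theorem total_two_diagonal_length_le (N : ℕ) [NeZero N] (hN : 4 ≤ N) (ℓ : ℝ) (hℓ : 0 < ℓ)
    (y : ZMod N → EuclideanSpace ℝ (Fin 2))
    (hy : ∀ i, dist (y (i + 1)) (y i) = ℓ) :
    ∑ i : ZMod N, dist (y i) (y (i + 2)) ≤ 2 * N * ℓ * Real.cos (Real.pi / N) :=
  total_two_diagonal_length_le_general N hN ℓ y hy
end

section
/- Let N ≥ 4 and ℓ > 0. If an equilateral closed polygon y : ℤ/Nℤ → ℝ² with edge length ℓ satisfies ∑_{i=1}^N |y_i − y_{i+2}| = 2Nℓ cos(π/N), then y is the image of the regular N-gon with edge length ℓ under an isometry of ℝ². -/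
/-!
Identify `ℝ²` with `ℂ` and let `e i = y (i + 1) - y i` be the edges: `|e i| = ℓ` and
`∑ e i = 0`. The `2`-diagonals are `|e i + e (i + 1)|`, with squares
`2ℓ² + 2 Re (e (i + 1) * conj (e i))`. Expanding `e` in the characters `ω ^ (j k)`,
`ω = exp (2πi/N)`, gives the discrete Wirtinger inequality
`∑ Re (e (i + 1) * conj (e i)) ≤ cos (2π/N) ∑ |e i|²` (the zeroth Fourier coefficient vanishes),
and together with Cauchy–Schwarz this bounds the total `2`-diagonal length by
`2Nℓ cos (π/N)`. Equality forces all `2`-diagonals to be equal and the Fourier support of `e`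
to lie in `{1, -1}`, i.e. `e j = a ω ^ j + b ω ^ (-j)`; equal edges and equal `2`-diagonals
then force `a b̄ = 0`, so `e j = a ω ^ (± j)` and `y` is a regular `N`-gon.
-/

open Real

/-- The regular `N`-gon with edge length `ℓ` in the plane:
`ỹ_j = R(cos(2πj/N), sin(2πj/N))` with `R = ℓ(2 sin(π/N))⁻¹`. -/
noncomputable def regularNGon (N : ℕ) (ℓ : ℝ) : ZMod N → EuclideanSpace ℝ (Fin 2) :=
  fun j => WithLp.toLp 2 ![ℓ / (2 * Real.sin (Real.pi / N)) * Real.cos (2 * Real.pi * j.val / N),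
             ℓ / (2 * Real.sin (Real.pi / N)) * Real.sin (2 * Real.pi * j.val / N)]

open Finset ZMod ComplexConjugate
open Complex (I normSq)

lemma cos_le_cos_two_pi_mul_div_of_two_mul_le {N m v : ℕ} (hmv : m ≤ v) (hvN : 2 * v ≤ N) :
    cos (2 * π * v / N) ≤ cos (2 * π * m / N) := by
  rcases N.eq_zero_or_pos with rfl | hN
  · simp
  have hN' : (0 : ℝ) < N := by exact_mod_cast hN
  have hvN' : (2 * v : ℝ) ≤ N := by exact_mod_cast hvN
  apply cos_le_cos_of_nonneg_of_le_pi (by positivity)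
  · rw [div_le_iff₀ hN']; nlinarith [pi_pos]
  · gcongr

lemma cos_le_cos_two_pi_mul_div {N m v : ℕ} (hmv : m ≤ v) (hvN : v + m ≤ N) :
    cos (2 * π * v / N) ≤ cos (2 * π * m / N) := by
  rcases N.eq_zero_or_pos with rfl | hN₀
  · obtain rfl : v = 0 := by omega
    obtain rfl : m = 0 := by omega
    rfl
  rcases le_total (2 * v) N with h | h
  · exact cos_le_cos_two_pi_mul_div_of_two_mul_le hmv h
  · have hN : (N : ℝ) ≠ 0 := by positivity
    have hsymm : cos (2 * π * v / N) = cos (2 * π * (N - v : ℕ) / N) := by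
      rw [Nat.cast_sub (by omega), ← cos_two_pi_sub]
      congr 1
      field_simp
    rw [hsymm]
    exact cos_le_cos_two_pi_mul_div_of_two_mul_le (by omega) (by omega)

lemma cos_two_pi_mul_div_lt {N v : ℕ} (hv : 2 ≤ v) (hvN : v + 2 ≤ N) :
    cos (2 * π * v / N) < cos (2 * π / N) := by
  have hN : (4 : ℝ) ≤ N := by norm_cast; omega
  calc cos (2 * π * v / N) ≤ cos (2 * π * (2 : ℕ) / N) := cos_le_cos_two_pi_mul_div hv hvN
    _ < cos (2 * π / N) := by
      apply cos_lt_cos_of_nonneg_of_le_pi (by positivity)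
      · rw [div_le_iff₀ (by positivity)]; push_cast; nlinarith [pi_pos]
      · apply div_lt_div_of_pos_right _ (by positivity)
        push_cast; nlinarith [pi_pos]

variable {N : ℕ} [NeZero N]

local notation "χ" => ZMod.stdAddChar (N := N)

lemma stdAddChar_eq_exp (k : ZMod N) :
    χ k = Complex.exp ((2 * π * k.val / N : ℝ) * I) := by
  rw [stdAddChar_apply, toCircle_apply]
  push_cast
  ring_nf

lemma re_stdAddChar (k : ZMod N) : (χ k).re = cos (2 * π * k.val / N) := by
  rw [stdAddChar_eq_exp, Complex.exp_ofReal_mul_I_re]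

lemma im_stdAddChar (k : ZMod N) : (χ k).im = sin (2 * π * k.val / N) := by
  rw [stdAddChar_eq_exp, Complex.exp_ofReal_mul_I_im]

lemma re_stdAddChar_le {k : ZMod N} (hk : k ≠ 0) : (χ k).re ≤ cos (2 * π / N) := by
  have h0 := (ZMod.val_ne_zero k).2 hk
  have hlt := k.val_lt
  simpa [re_stdAddChar] using cos_le_cos_two_pi_mul_div (N := N) (m := 1) (v := k.val)
    (by omega) (by omega)

lemma re_stdAddChar_lt {k : ZMod N} (hk₀ : k ≠ 0) (hk₁ : k ≠ 1) (hk₂ : k ≠ -1) :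
    (χ k).re < cos (2 * π / N) := by
  rw [re_stdAddChar]
  have h0 := (ZMod.val_ne_zero k).2 hk₀
  have hlt := k.val_lt
  have h1 : k.val ≠ 1 := fun h => hk₁ (by rw [← ZMod.natCast_zmod_val k, h, Nat.cast_one])
  have h2 : k.val + 1 ≠ N := fun h => hk₂ (by
    rw [← ZMod.natCast_zmod_val k, eq_neg_iff_add_eq_zero, ← Nat.cast_add_one, h,
      ZMod.natCast_self])
  exact cos_two_pi_mul_div_lt (by omega) (by omega)

lemma norm_stdAddChar_one_sub_one [Fact (1 < N)] : ‖χ 1 - 1‖ = 2 * sin (π / N) := by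
  rw [stdAddChar_eq_exp, ZMod.val_one, mul_comm, Complex.norm_exp_I_mul_ofReal_sub_one,
    Nat.cast_one, mul_one, show 2 * π / N / 2 = π / N by ring, Real.norm_eq_abs,
    abs_of_nonneg]
  exact mul_nonneg zero_le_two (sin_nonneg_of_nonneg_of_le_pi (by positivity)
    (div_le_self pi_pos.le (by exact_mod_cast Nat.one_le_of_lt (Fact.out (p := 1 < N)))))

lemma sum_normSq_dft_mul_stdAddChar (e : ZMod N → ℂ) (s : ZMod N) :
    ∑ k, (normSq (𝓕 e k) : ℂ) * χ (k * s) = N * ∑ j, e (j + s) * conj (e j) := by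
  have hchar : ∀ k j j' : ZMod N, χ (-(j * k)) * χ (-(-(j' * k))) * χ (k * s) =
      χ (k * (j' + s - j)) := fun k j j' => by
    rw [← AddChar.map_add_eq_mul, ← AddChar.map_add_eq_mul]; ring_nf
  calc ∑ k, (normSq (𝓕 e k) : ℂ) * χ (k * s)
      = ∑ k, ∑ j, ∑ j', χ (k * (j' + s - j)) * (e j * conj (e j')) := by
        refine sum_congr rfl fun k _ => ?_
        rw [← Complex.mul_conj, dft_apply, map_sum, sum_mul_sum, sum_mul]
        refine sum_congr rfl fun j _ => ?_
        rw [sum_mul]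
        refine sum_congr rfl fun j' _ => ?_
        simp only [smul_eq_mul, map_mul, ← AddChar.map_neg_eq_conj, ← hchar]
        ring
    _ = ∑ j, ∑ j', (∑ k, χ (k * (j' + s - j))) * (e j * conj (e j')) := by
        rw [sum_comm]
        refine sum_congr rfl fun j _ => ?_
        rw [sum_comm]
        simp only [sum_mul]
    _ = ∑ j', N * (e (j' + s) * conj (e j')) := by
        rw [sum_comm]
        refine sum_congr rfl fun j' _ => ?_
        simp only [AddChar.sum_mulShift _ (isPrimitive_stdAddChar N), ZMod.card, sub_eq_zero,
          Nat.cast_ite, Nat.cast_zero, ite_mul, zero_mul, sum_ite_eq, mem_univ, if_true]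
    _ = N * ∑ j, e (j + s) * conj (e j) := (mul_sum _ _ _).symm

lemma sum_normSq_dft_mul_cos_sub_re (e : ZMod N → ℂ) :
    ∑ k, normSq (𝓕 e k) * (cos (2 * π / N) - (χ k).re) =
      N * (cos (2 * π / N) * ∑ j, normSq (e j) - ∑ j, (e (j + 1) * conj (e j)).re) := by
  have parseval := congrArg Complex.re (sum_normSq_dft_mul_stdAddChar e 0)
  have shift := congrArg Complex.re (sum_normSq_dft_mul_stdAddChar e 1)
  simp only [mul_zero, AddChar.map_zero_eq_one, mul_one, add_zero, Complex.mul_conj,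
    Complex.re_sum, Complex.ofReal_re, ← Complex.ofReal_natCast, Complex.re_ofReal_mul,
    ← Complex.ofReal_sum] at parseval shift
  simp only [mul_sub, sum_sub_distrib, ← sum_mul, parseval, shift]
  ring

lemma normSq_dft_mul_cos_sub_re_nonneg {e : ZMod N → ℂ} (he : ∑ j, e j = 0) (k : ZMod N) :
    0 ≤ normSq (𝓕 e k) * (cos (2 * π / N) - (χ k).re) := by
  rcases eq_or_ne k 0 with rfl | hk
  · simp [dft_apply_zero, he]
  · exact mul_nonneg (Complex.normSq_nonneg _) (sub_nonneg.2 (re_stdAddChar_le hk))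

/-- The discrete Wirtinger inequality. -/
theorem re_sum_mul_conj_add_one_le {e : ZMod N → ℂ} (he : ∑ j, e j = 0) :
    ∑ j, (e (j + 1) * conj (e j)).re ≤ cos (2 * π / N) * ∑ j, normSq (e j) := by
  have h := sum_normSq_dft_mul_cos_sub_re e
  have hN : (0 : ℝ) < N := by exact_mod_cast Nat.pos_of_neZero N
  have : 0 ≤ ∑ k, normSq (𝓕 e k) * (cos (2 * π / N) - (χ k).re) :=
    sum_nonneg fun k _ => normSq_dft_mul_cos_sub_re_nonneg he k
  nlinarith

lemma dft_eq_zero_of_re_sum_mul_conj_add_one_eq {e : ZMod N → ℂ} (he : ∑ j, e j = 0)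
    (heq : ∑ j, (e (j + 1) * conj (e j)).re = cos (2 * π / N) * ∑ j, normSq (e j))
    {k : ZMod N} (hk₀ : k ≠ 0) (hk₁ : k ≠ 1) (hk₂ : k ≠ -1) : 𝓕 e k = 0 := by
  have hsum : ∑ k, normSq (𝓕 e k) * (cos (2 * π / N) - (χ k).re) = 0 := by
    rw [sum_normSq_dft_mul_cos_sub_re, heq, sub_self, mul_zero]
  have hk := (sum_eq_zero_iff_of_nonneg fun k _ => normSq_dft_mul_cos_sub_re_nonneg he k).1
    hsum k (mem_univ k)
  have hgap : cos (2 * π / N) - (χ k).re ≠ 0 := (sub_pos.2 (re_stdAddChar_lt hk₀ hk₁ hk₂)).ne'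
  exact Complex.normSq_eq_zero.1 ((mul_eq_zero.1 hk).resolve_right hgap)

lemma exists_eq_add_of_dft_eq_zero {e : ZMod N → ℂ} (h1 : (1 : ZMod N) ≠ -1)
    (h : ∀ k, k ≠ 1 → k ≠ -1 → 𝓕 e k = 0) :
    ∃ a b : ℂ, ∀ j, e j = a * χ j + b * χ (-j) := by
  refine ⟨(N : ℂ)⁻¹ * 𝓕 e 1, (N : ℂ)⁻¹ * 𝓕 e (-1), fun j => ?_⟩
  have hinv := congrFun ((𝓕 : (ZMod N → ℂ) ≃ₗ[ℂ] _).symm_apply_apply e) j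
  rw [invDFT_apply, Fintype.sum_eq_add 1 (-1) h1 fun k hk => by rw [h k hk.1 hk.2, smul_zero]]
    at hinv
  rw [← hinv]
  simp only [smul_eq_mul, one_mul, neg_one_mul]
  ring

lemma re_two_mode_mul_conj (a b : ℂ) (i j : ZMod N) :
    ((a * χ i + b * χ (-i)) * conj (a * χ j + b * χ (-j))).re =
      (normSq a + normSq b) * (χ (i - j)).re + 2 * (a * conj b * χ (i + j)).re := by
  have key : ∀ u v : ℂ, ((a * u + b * conj u) * conj (a * v + b * conj v)).re =
      (normSq a + normSq b) * (u * conj v).re + 2 * (a * conj b * (u * v)).re := fun u v => by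
    simp only [Complex.add_re, Complex.mul_re, Complex.mul_im, Complex.add_im, Complex.conj_re,
      Complex.conj_im, map_add, map_mul, Complex.normSq_apply]
    ring
  simp only [AddChar.map_neg_eq_conj, sub_eq_add_neg, AddChar.map_add_eq_mul]
  exact key (χ i) (χ j)

lemma ZMod.apply_eq_apply_zero_of_apply_add_one {α : Type*} {g : ZMod N → α}
    (h : ∀ j, g (j + 1) = g j) (j : ZMod N) : g j = g 0 := by
  have key : ∀ n : ℕ, g n = g 0 := fun n => by
    induction n with
    | zero => rw [Nat.cast_zero]
    | succ n ih => rw [Nat.cast_succ, h, ih]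
  simpa using key j.val

lemma sum_apply_add_one_sub {M : Type*} [AddCommGroup M] (f : ZMod N → M) :
    ∑ i, (f (i + 1) - f i) = 0 := by
  rw [sum_sub_distrib, sub_eq_zero]
  exact Equiv.sum_comp (Equiv.addRight 1) f

theorem exists_isometryEquiv_of_sub_eq_mul_stdAddChar [Fact (1 < N)] {f : ZMod N → ℂ} {a : ℂ}
    (h : ∀ j, f (j + 1) - f j = a * χ j) :
    ∃ T : ℂ ≃ᵢ ℂ, ∀ j, f j = T ((‖a‖ / (2 * sin (π / N)) : ℝ) * χ j) := by
  have hχ : χ 1 - 1 ≠ 0 := sub_ne_zero.2 fun h1 =>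
    one_ne_zero (ZMod.injective_stdAddChar (h1.trans (AddChar.map_zero_eq_one _).symm))
  set c := a / (χ 1 - 1)
  have hc : ‖c‖ = ‖a‖ / (2 * sin (π / N)) := by rw [norm_div, norm_stdAddChar_one_sub_one]
  have hconst : ∀ j, f j - c * χ j = f 0 - c := fun j => by
    simpa using ZMod.apply_eq_apply_zero_of_apply_add_one (g := fun j => f j - c * χ j)
      (fun j => by
        rw [AddChar.map_add_eq_mul, sub_eq_sub_iff_sub_eq_sub, h, show c * (χ j * χ 1) - c * χ j
          = c * (χ 1 - 1) * χ j by ring, div_mul_cancel₀ a hχ]) j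
  refine ⟨(rotation (Circle.exp c.arg)).toIsometryEquiv.trans (IsometryEquiv.addRight (f 0 - c)),
    fun j => ?_⟩
  have hpolar : c = (‖c‖ : ℂ) * Circle.exp c.arg := (Complex.norm_mul_exp_arg_mul_I c).symm
  simp only [IsometryEquiv.trans_apply, LinearIsometryEquiv.coe_toIsometryEquiv, rotation_apply,
    IsometryEquiv.addRight_apply, ← hc]
  linear_combination hconst j + χ j * hpolar

lemma norm_add_sq_of_norm_eq {u v : ℂ} {ℓ : ℝ} (hu : ‖u‖ = ℓ) (hv : ‖v‖ = ℓ) :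
    ‖u + v‖ ^ 2 = 2 * ℓ ^ 2 + 2 * (v * conj u).re := by
  rw [add_comm, Complex.sq_norm, Complex.normSq_add, ← Complex.sq_norm, ← Complex.sq_norm, hu, hv]
  ring

/-- Together with the Wirtinger inequality this is Cauchy–Schwarz for the `2`-diagonals, with its
equality case. -/
lemma sum_sq_norm_add_sub_eq {e : ZMod N → ℂ} {ℓ : ℝ} (hℓ : ∀ i, ‖e i‖ = ℓ) :
    ∑ i, (‖e i + e (i + 1)‖ - 2 * ℓ * cos (π / N)) ^ 2 =
      2 * (∑ i, (e (i + 1) * conj (e i)).re - cos (2 * π / N) * ∑ i, normSq (e i)) +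
        4 * ℓ * cos (π / N) * (2 * N * ℓ * cos (π / N) - ∑ i, ‖e i + e (i + 1)‖) := by
  have hcos : cos (2 * π / N) = 2 * cos (π / N) ^ 2 - 1 := by
    rw [← cos_two_mul]; ring_nf
  simp only [sub_sq, sum_add_distrib, sum_sub_distrib, norm_add_sq_of_norm_eq (hℓ _) (hℓ _),
    ← Complex.sq_norm, hℓ, ← mul_sum, ← sum_mul, sum_const, card_univ, ZMod.card, nsmul_eq_mul,
    hcos]
  ring

section
variable [Fact (2 < N)]

theorem exists_eq_add_of_re_sum_mul_conj_add_one_eq {e : ZMod N → ℂ} (he : ∑ j, e j = 0)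
    (heq : ∑ j, (e (j + 1) * conj (e j)).re = cos (2 * π / N) * ∑ j, normSq (e j)) :
    ∃ a b : ℂ, ∀ j, e j = a * χ j + b * χ (-j) :=
  exists_eq_add_of_dft_eq_zero ZMod.neg_one_ne_one.symm fun k hk₁ hk₂ =>
    if hk₀ : k = 0 then by rw [hk₀, dft_apply_zero, he]
    else dft_eq_zero_of_re_sum_mul_conj_add_one_eq he heq hk₀ hk₁ hk₂

lemma im_stdAddChar_one_pos : 0 < (χ (1 : ZMod N)).im := by
  have hN : (2 : ℝ) < N := by exact_mod_cast Fact.out (p := 2 < N)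
  have : Fact (1 < N) := ⟨by have := Fact.out (p := 2 < N); omega⟩
  rw [im_stdAddChar, ZMod.val_one, Nat.cast_one, mul_one]
  apply sin_pos_of_pos_of_lt_pi (by positivity)
  rw [div_lt_iff₀ (by positivity)]
  nlinarith [pi_pos]

lemma stdAddChar_two_ne_one : χ (2 : ZMod N) ≠ 1 := by
  intro h
  have h2 : (2 : ZMod N) = 0 :=
    ZMod.injective_stdAddChar (h.trans (AddChar.map_zero_eq_one _).symm)
  exact ZMod.neg_one_ne_one (by linear_combination -h2)

lemma eq_zero_of_re_mul_stdAddChar_eq {z : ℂ} (h₀ : z.re = (z * χ (2 : ZMod N)).re)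
    (h₁ : (z * χ (1 : ZMod N)).re = (z * χ (3 : ZMod N)).re) : z = 0 := by
  set w := z * (1 - χ (2 : ZMod N))
  have hw₀ : w.re = 0 := by simp only [w, mul_sub, mul_one, Complex.sub_re, h₀, sub_self]
  have hw₁ : (w * χ 1).re = 0 := by
    have : χ (2 : ZMod N) * χ 1 = χ 3 := by rw [← AddChar.map_add_eq_mul]; norm_num
    rw [show w * χ 1 = z * χ 1 - z * χ 3 by rw [← this]; ring, Complex.sub_re, h₁, sub_self]
  have hw : w = 0 := by
    rw [Complex.mul_re, hw₀, zero_mul, zero_sub, neg_eq_zero] at hw₁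
    exact Complex.ext hw₀ ((mul_eq_zero.1 hw₁).resolve_right im_stdAddChar_one_pos.ne')
  exact (mul_eq_zero.1 hw).resolve_right (sub_ne_zero.2 stdAddChar_two_ne_one.symm)

theorem eq_zero_or_eq_zero_of_two_mode {e : ZMod N → ℂ} {a b : ℂ} {r c : ℝ}
    (he : ∀ j, e j = a * χ j + b * χ (-j)) (hnorm : ∀ j, normSq (e j) = r)
    (hturn : ∀ j, (e (j + 1) * conj (e j)).re = c) : a = 0 ∨ b = 0 := by
  have hre : ∀ i j, (e i * conj (e j)).re =
      (normSq a + normSq b) * (χ (i - j)).re + 2 * (a * conj b * χ (i + j)).re := fun i j => by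
    rw [he, he, re_two_mode_mul_conj]
  have hnorm' : ∀ j, (e j * conj (e j)).re = r := fun j => by
    rw [Complex.mul_conj, Complex.ofReal_re, hnorm]
  have h₀ := (hnorm' 0).trans (hnorm' 1).symm
  have h₁ := (hturn 0).trans (hturn 1).symm
  rw [hre, hre, sub_self, sub_self, add_zero, one_add_one_eq_two, AddChar.map_zero_eq_one,
    mul_one] at h₀
  rw [hre, hre, show (0 : ZMod N) + 1 - 0 = 1 + 1 - 1 by ring,
    show (0 : ZMod N) + 1 + 0 = 1 by ring, show (1 : ZMod N) + 1 + 1 = 3 by ring] at h₁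
  have hz := eq_zero_of_re_mul_stdAddChar_eq (z := a * conj b) (by linarith) (by linarith)
  simpa using hz

theorem exists_eq_mul_stdAddChar_of_sum_norm_add_eq {e : ZMod N → ℂ} {ℓ : ℝ}
    (hℓ : ∀ i, ‖e i‖ = ℓ) (he : ∑ i, e i = 0)
    (hsum : ∑ i, ‖e i + e (i + 1)‖ = 2 * N * ℓ * cos (π / N)) :
    ∃ a : ℂ, (∀ j, e j = a * χ j) ∨ (∀ j, e j = a * χ (-j)) := by
  have hid := sum_sq_norm_add_sub_eq hℓ
  rw [hsum, sub_self, mul_zero, add_zero] at hid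
  have hsq : 0 ≤ ∑ i, (‖e i + e (i + 1)‖ - 2 * ℓ * cos (π / N)) ^ 2 :=
    sum_nonneg fun i _ => sq_nonneg _
  have hS := re_sum_mul_conj_add_one_le he
  obtain ⟨a, b, hab⟩ := exists_eq_add_of_re_sum_mul_conj_add_one_eq he (by linarith)
  have hzero : ∑ i, (‖e i + e (i + 1)‖ - 2 * ℓ * cos (π / N)) ^ 2 = 0 := by linarith
  have hdiag : ∀ i, ‖e i + e (i + 1)‖ = 2 * ℓ * cos (π / N) := fun i => by
    have := (sum_eq_zero_iff_of_nonneg fun i _ => sq_nonneg _).1 hzero i (mem_univ i)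
    exact sub_eq_zero.1 (pow_eq_zero_iff two_ne_zero |>.1 this)
  have hturn : ∀ i, (e (i + 1) * conj (e i)).re = ((2 * ℓ * cos (π / N)) ^ 2 - 2 * ℓ ^ 2) / 2 :=
    fun i => by rw [← hdiag i, norm_add_sq_of_norm_eq (hℓ i) (hℓ _)]; ring
  have hnorm : ∀ i, normSq (e i) = ℓ ^ 2 := fun i => by rw [← Complex.sq_norm, hℓ]
  rcases eq_zero_or_eq_zero_of_two_mode hab hnorm hturn with rfl | rfl
  · exact ⟨b, Or.inr fun j => by rw [hab, zero_mul, zero_add]⟩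
  · exact ⟨a, Or.inl fun j => by rw [hab, zero_mul, add_zero]⟩

theorem exists_isometryEquiv_of_sum_norm_sub_eq {f : ZMod N → ℂ} {ℓ : ℝ}
    (hf : ∀ i, ‖f (i + 1) - f i‖ = ℓ)
    (hsum : ∑ i, ‖f i - f (i + 2)‖ = 2 * N * ℓ * cos (π / N)) :
    ∃ T : ℂ ≃ᵢ ℂ, ∀ j, f j = T ((ℓ / (2 * sin (π / N)) : ℝ) * χ j) := by
  have : Fact (1 < N) := ⟨by have := Fact.out (p := 2 < N); omega⟩
  have hdiag : ∀ i, ‖f i - f (i + 2)‖ = ‖(f (i + 1) - f i) + (f (i + 1 + 1) - f (i + 1))‖ :=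
    fun i => by rw [norm_sub_rev, add_assoc, one_add_one_eq_two]; ring_nf
  obtain ⟨a, ha⟩ := exists_eq_mul_stdAddChar_of_sum_norm_add_eq hf (sum_apply_add_one_sub f)
    (by simpa only [hdiag] using hsum)
  have ha₀ : ‖a‖ = ℓ := by
    rw [← hf 0]
    rcases ha with ha | ha <;> rw [ha 0] <;> simp
  rcases ha with ha | ha
  · obtain ⟨T, hT⟩ := exists_isometryEquiv_of_sub_eq_mul_stdAddChar ha
    exact ⟨T, by rwa [ha₀] at hT⟩
  · have ha' : ∀ j, conj (f (j + 1)) - conj (f j) = conj a * χ j := fun j => by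
      rw [← map_sub, ha, map_mul, ← AddChar.map_neg_eq_conj, neg_neg]
    obtain ⟨T, hT⟩ :=
      exists_isometryEquiv_of_sub_eq_mul_stdAddChar (f := fun j => conj (f j)) ha'
    refine ⟨T.trans Complex.conjLIE.toIsometryEquiv, fun j => ?_⟩
    rw [IsometryEquiv.trans_apply, LinearIsometryEquiv.coe_toIsometryEquiv, Complex.conjLIE_apply,
      ← ha₀, ← Complex.norm_conj, ← hT, Complex.conj_conj]

end

lemma regularNGon_eq_repr (ℓ : ℝ) (j : ZMod N) :
    regularNGon N ℓ j =
      Complex.orthonormalBasisOneI.repr ((ℓ / (2 * sin (π / N)) : ℝ) * χ j) := by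
  ext i
  fin_cases i <;> simp only [regularNGon, Complex.orthonormalBasisOneI_repr_apply,
    Complex.re_ofReal_mul, Complex.im_ofReal_mul, re_stdAddChar, im_stdAddChar]

theorem total_two_diagonal_length_eq_iff_regular_general (N : ℕ) [NeZero N] (hN : 4 ≤ N)
    (ℓ : ℝ) (y : ZMod N → EuclideanSpace ℝ (Fin 2))
    (hy : ∀ i, dist (y (i + 1)) (y i) = ℓ)
    (heq : ∑ i : ZMod N, dist (y i) (y (i + 2)) = 2 * N * ℓ * Real.cos (Real.pi / N)) :
    ∃ T : EuclideanSpace ℝ (Fin 2) ≃ᵢ EuclideanSpace ℝ (Fin 2),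
      ∀ j, y j = T (regularNGon N ℓ j) := by
  have : Fact (2 < N) := ⟨by omega⟩
  set W := Complex.orthonormalBasisOneI.repr
  have hdist : ∀ i j, ‖W.symm (y i) - W.symm (y j)‖ = dist (y i) (y j) := fun i j => by
    rw [← dist_eq_norm, W.symm.dist_map]
  obtain ⟨T, hT⟩ := exists_isometryEquiv_of_sum_norm_sub_eq (f := fun j => W.symm (y j))
    (by simpa only [hdist] using hy) (by simpa only [hdist] using heq)
  refine ⟨W.symm.toIsometryEquiv.trans (T.trans W.toIsometryEquiv), fun j => ?_⟩
  rw [regularNGon_eq_repr, IsometryEquiv.trans_apply, IsometryEquiv.trans_apply,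
    LinearIsometryEquiv.coe_toIsometryEquiv, LinearIsometryEquiv.coe_toIsometryEquiv,
    LinearIsometryEquiv.symm_apply_apply, ← hT, LinearIsometryEquiv.apply_symm_apply]

/-- Let `N ≥ 4` and `ℓ > 0`. If an equilateral closed polygon `y : ℤ/Nℤ → ℝ²` with edge
length `ℓ` satisfies `∑_i |y_i − y_{i+2}| = 2Nℓ cos(π/N)`, then `y` is the image of the
regular `N`-gon with edge length `ℓ` under an isometry of `ℝ²`. -/
theorem total_two_diagonal_length_eq_iff_regular (N : ℕ) [NeZero N] (hN : 4 ≤ N)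
    (ℓ : ℝ) (hℓ : 0 < ℓ) (y : ZMod N → EuclideanSpace ℝ (Fin 2))
    (hy : ∀ i, dist (y (i + 1)) (y i) = ℓ)
    (heq : ∑ i : ZMod N, dist (y i) (y (i + 2)) = 2 * N * ℓ * Real.cos (Real.pi / N)) :
    ∃ T : EuclideanSpace ℝ (Fin 2) ≃ᵢ EuclideanSpace ℝ (Fin 2),
      ∀ j, y j = T (regularNGon N ℓ j) :=
  total_two_diagonal_length_eq_iff_regular_general N hN ℓ y hy heq
end

section
/- For integers N, m, r with 2 ≤ r < m ≤ N/2, one has sin(πm/N)·sin(πr/N) > sin(π/N)·|sin(πmr/N)|. -/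
/-!
Put `θ = π/N` and `φ = mθ ≤ π/2`. The key fact is that `x ↦ sin (n x) / sin x` is decreasing on
`(0, π/(2n)]`: the two-step recursion `sin ((n+2)x) = sin (n x) + 2 sin x cos ((n+1)x)` reduces this
to the monotonicity of `cos` on `[0, π]`. If `rφ ≤ π/2` this gives the claim at once. Otherwise
`|sin (rφ)| ≤ 1 = sin (r · π/(2r))`, and comparing `θ` with `π/(2r) < φ` instead gives
`sin θ ≤ sin (rθ) sin (π/(2r)) < sin (rθ) sin φ`.
-/

open Real

lemma sin_nat_add_two_mul_mul_sin_sub (n : ℕ) (θ φ : ℝ) :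
    sin ((n + 2) * θ) * sin φ - sin θ * sin ((n + 2) * φ) =
      sin (n * θ) * sin φ - sin θ * sin (n * φ) +
        2 * (sin θ * sin φ) * (cos ((n + 1) * θ) - cos ((n + 1) * φ)) := by
  have hsin (x : ℝ) : sin ((n + 2) * x) = sin (n * x) + 2 * sin x * cos ((n + 1) * x) := by
    rw [show (n + 2) * x = (n + 1) * x + x by ring, show n * x = (n + 1) * x - x by ring,
      sin_add, sin_sub]
    ring
  rw [hsin θ, hsin φ]
  ring

lemma sin_mul_sin_nat_mul_le {θ φ : ℝ} (n : ℕ) (hθ : 0 ≤ θ) (hθφ : θ ≤ φ)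
    (hφ : n * φ ≤ π / 2) :
    sin θ * sin (n * φ) ≤ sin (n * θ) * sin φ := by
  induction n using Nat.twoStepInduction with
  | zero => simp
  | one => simp [mul_comm]
  | more n ih _ =>
    push_cast at hφ ⊢
    have hn : (0 : ℝ) ≤ n := n.cast_nonneg
    have hsθ : 0 ≤ sin θ := sin_nonneg_of_nonneg_of_le_pi hθ (by nlinarith [pi_pos])
    have hsφ : 0 ≤ sin φ := sin_nonneg_of_nonneg_of_le_pi (hθ.trans hθφ) (by nlinarith [pi_pos])
    have hcos : cos ((n + 1) * φ) ≤ cos ((n + 1) * θ) :=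
      cos_le_cos_of_nonneg_of_le_pi (by positivity) (by nlinarith [pi_pos]) (by nlinarith)
    have := sin_nat_add_two_mul_mul_sin_sub n θ φ
    nlinarith [ih (by nlinarith), mul_nonneg (mul_nonneg hsθ hsφ) (sub_nonneg.2 hcos)]

lemma sin_mul_sin_nat_mul_lt {θ φ : ℝ} {n : ℕ} (hn : 2 ≤ n) (hθ : 0 < θ) (hθφ : θ < φ)
    (hφ : n * φ ≤ π / 2) :
    sin θ * sin (n * φ) < sin (n * θ) * sin φ := by
  obtain ⟨j, rfl⟩ : ∃ j, n = j + 2 := ⟨n - 2, by omega⟩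
  push_cast at hφ ⊢
  have hj : (0 : ℝ) ≤ j := j.cast_nonneg
  have hsθ : 0 < sin θ := sin_pos_of_pos_of_lt_pi hθ (by nlinarith [pi_pos])
  have hsφ : 0 < sin φ := sin_pos_of_pos_of_lt_pi (hθ.trans hθφ) (by nlinarith [pi_pos])
  have hcos : cos ((j + 1) * φ) < cos ((j + 1) * θ) :=
    cos_lt_cos_of_nonneg_of_le_pi (by positivity) (by nlinarith [pi_pos]) (by nlinarith)
  have := sin_nat_add_two_mul_mul_sin_sub j θ φ
  nlinarith [sin_mul_sin_nat_mul_le j hθ.le hθφ.le (by nlinarith),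
    mul_pos (mul_pos hsθ hsφ) (sub_pos.2 hcos)]

lemma sin_le_sin_nat_mul_mul_sin_pi_div {θ : ℝ} {n : ℕ} (hn : n ≠ 0) (hθ : 0 ≤ θ)
    (hnθ : n * θ ≤ π / 2) :
    sin θ ≤ sin (n * θ) * sin (π / (2 * n)) := by
  have hnψ : n * (π / (2 * n)) = π / 2 := by field_simp
  have hθψ : θ ≤ π / (2 * n) := by
    rw [le_div_iff₀ (by positivity)]
    linarith
  simpa [hnψ] using sin_mul_sin_nat_mul_le n hθ hθψ hnψ.le

/-- For integers `N, m, r` with `2 ≤ r < m ≤ N/2`, one has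
`sin(πm/N)·sin(πr/N) > sin(π/N)·|sin(πmr/N)|`. -/
theorem sin_diag_ineq (N m r : ℕ) (hr : 2 ≤ r) (hrm : r < m) (hmN : 2 * m ≤ N) :
    Real.sin (Real.pi / N) * |Real.sin (Real.pi * m * r / N)| <
      Real.sin (Real.pi * m / N) * Real.sin (Real.pi * r / N) := by
  have hN : (0 : ℝ) < N := by exact_mod_cast (show 0 < N by omega)
  have hr' : (2 : ℝ) ≤ r := by exact_mod_cast hr
  have hrm' : (r : ℝ) + 1 ≤ m := by exact_mod_cast hrm
  have hmN' : 2 * (m : ℝ) ≤ N := by exact_mod_cast hmN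
  set θ := π / N
  have hθ : 0 < θ := by positivity
  have hNθ : N * θ = π := mul_div_cancel₀ π hN.ne'
  rw [show π * m * r / N = r * (m * θ) by ring, show π * m / N = m * θ by ring,
    show π * r / N = r * θ by ring]
  have hθφ : θ < m * θ := by nlinarith
  have hφ : m * θ ≤ π / 2 := by nlinarith
  have hrθ : r * θ ≤ π / 2 := by nlinarith
  by_cases hrφ : r * (m * θ) ≤ π / 2
  · rw [abs_of_nonneg (sin_nonneg_of_nonneg_of_le_pi (by positivity) (by linarith [pi_pos])),
      mul_comm (sin (m * θ))]
    exact sin_mul_sin_nat_mul_lt hr hθ hθφ hrφ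
  · have hψ : 0 < π / (2 * r) := by positivity
    have hψφ : π / (2 * r) < m * θ := by
      rw [div_lt_iff₀ (by positivity)]
      linarith
    calc sin θ * |sin (r * (m * θ))| ≤ sin θ :=
          mul_le_of_le_one_right (sin_nonneg_of_nonneg_of_le_pi hθ.le (by linarith))
            (abs_sin_le_one _)
      _ ≤ sin (r * θ) * sin (π / (2 * r)) :=
          sin_le_sin_nat_mul_mul_sin_pi_div (by omega) hθ.le hrθ
      _ < sin (m * θ) * sin (r * θ) := by
          rw [mul_comm (sin (m * θ))]
          exact mul_lt_mul_of_pos_left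
            (sin_lt_sin_of_lt_of_le_pi_div_two (by linarith) hφ hψφ)
            (sin_pos_of_pos_of_lt_pi (by positivity) (by linarith [pi_pos]))
end

section
/- For integers N, m, r with 2 ≤ r < m ≤ N/2, the Chebyshev polynomials of the second kind satisfy U_{m−1}(cos(π/N)) > |U_{m−1}(cos(πr/N))|. -/
open Real Polynomial

/-- Weak antitonicity of `x ↦ sin (j*x) / sin x`, stated without division. -/
lemma sin_mul_div_antitone (j : ℕ) {a b : ℝ} (ha : 0 ≤ a) (hab : a ≤ b)
    (hb2 : b ≤ π / 2) (hjb : (j : ℝ) * b ≤ π) :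
    Real.sin ((j : ℝ) * b) * Real.sin a ≤ Real.sin ((j : ℝ) * a) * Real.sin b := by
  induction j with
  | zero => simp
  | succ j ih =>
    have hπ := Real.pi_pos
    have hb0 : 0 ≤ b := ha.trans hab
    have hjb' : (j : ℝ) * b ≤ π := by
      have : (j : ℝ) * b ≤ ((j : ℝ) + 1) * b := by nlinarith
      refine this.trans ?_
      push_cast at hjb ⊢; linarith
    have ihh := ih hjb'
    have hsa : 0 ≤ Real.sin a :=
      Real.sin_nonneg_of_nonneg_of_le_pi ha (by linarith)
    have hsb : 0 ≤ Real.sin b :=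
      Real.sin_nonneg_of_nonneg_of_le_pi hb0 (by linarith)
    have hja0 : 0 ≤ (j : ℝ) * a := by positivity
    have hjab : (j : ℝ) * a ≤ (j : ℝ) * b := by
      have : (0:ℝ) ≤ (j:ℝ) := by positivity
      nlinarith
    have hsja : 0 ≤ Real.sin ((j : ℝ) * a) :=
      Real.sin_nonneg_of_nonneg_of_le_pi hja0 (hjab.trans hjb')
    have hcb : 0 ≤ Real.cos b := Real.cos_nonneg_of_mem_Icc ⟨by linarith, hb2⟩
    have hcab : Real.cos b ≤ Real.cos a :=
      Real.cos_le_cos_of_nonneg_of_le_pi ha (by linarith) hab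
    have hcjab : Real.cos ((j : ℝ) * b) ≤ Real.cos ((j : ℝ) * a) :=
      Real.cos_le_cos_of_nonneg_of_le_pi hja0 hjb' hjab
    have e1 : Real.sin (((j : ℕ) + 1 : ℕ) * b)
        = Real.sin ((j : ℝ) * b) * Real.cos b + Real.cos ((j : ℝ) * b) * Real.sin b := by
      push_cast; rw [add_mul, one_mul, Real.sin_add]
    have e2 : Real.sin (((j : ℕ) + 1 : ℕ) * a)
        = Real.sin ((j : ℝ) * a) * Real.cos a + Real.cos ((j : ℝ) * a) * Real.sin a := by
      push_cast; rw [add_mul, one_mul, Real.sin_add]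
    push_cast
    push_cast at e1 e2
    rw [e1, e2]
    have t1 : Real.sin ((j : ℝ) * b) * Real.cos b * Real.sin a
        ≤ Real.sin ((j : ℝ) * a) * Real.cos a * Real.sin b := by
      linarith [mul_le_mul_of_nonneg_right ihh hcb,
        mul_le_mul_of_nonneg_left hcab (mul_nonneg hsja hsb)]
    have t2 : Real.cos ((j : ℝ) * b) * Real.sin b * Real.sin a
        ≤ Real.cos ((j : ℝ) * a) * Real.sin a * Real.sin b := by
      linarith [mul_le_mul_of_nonneg_right hcjab (mul_nonneg hsb hsa)]
    calc (Real.sin ((j:ℝ)*b)*Real.cos b + Real.cos ((j:ℝ)*b)*Real.sin b) * Real.sin a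
        = Real.sin ((j:ℝ)*b)*Real.cos b*Real.sin a
          + Real.cos ((j:ℝ)*b)*Real.sin b*Real.sin a := by ring
      _ ≤ Real.sin ((j:ℝ)*a)*Real.cos a*Real.sin b
          + Real.cos ((j:ℝ)*a)*Real.sin a*Real.sin b := by linarith
      _ = (Real.sin ((j:ℝ)*a)*Real.cos a + Real.cos ((j:ℝ)*a)*Real.sin a) * Real.sin b := by
          ring

/-- Strict antitonicity of `x ↦ sin (k*x) / sin x` for `k ≥ 2`, stated without division. -/
lemma sin_mul_div_strict_anti (k : ℕ) (hk : 2 ≤ k) {a b : ℝ} (ha : 0 < a) (hab : a < b)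
    (hb2 : b ≤ π / 2) (hkb : (k : ℝ) * b ≤ π) :
    Real.sin ((k : ℝ) * b) * Real.sin a < Real.sin ((k : ℝ) * a) * Real.sin b := by
  have hπ := Real.pi_pos
  obtain ⟨j, rfl⟩ : ∃ j, k = j + 1 := ⟨k - 1, by omega⟩
  have hj1 : 1 ≤ j := by omega
  have hb0 : 0 < b := ha.trans hab
  have hjb' : (j : ℝ) * b ≤ π := by
    have : (j : ℝ) * b ≤ ((j : ℝ) + 1) * b := by nlinarith
    refine this.trans ?_
    push_cast at hkb ⊢; linarith
  have ihh := sin_mul_div_antitone j ha.le hab.le hb2 hjb'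
  have hsa : 0 < Real.sin a := Real.sin_pos_of_pos_of_lt_pi ha (by linarith)
  have hsb : 0 < Real.sin b := Real.sin_pos_of_pos_of_lt_pi hb0 (by linarith)
  have hja0 : 0 ≤ (j : ℝ) * a := by positivity
  have hjR : (1:ℝ) ≤ (j:ℝ) := by exact_mod_cast hj1
  have hjab : (j : ℝ) * a < (j : ℝ) * b := by nlinarith
  have hsja : 0 ≤ Real.sin ((j : ℝ) * a) :=
    Real.sin_nonneg_of_nonneg_of_le_pi hja0 (hjab.le.trans hjb')
  have hcb : 0 ≤ Real.cos b := Real.cos_nonneg_of_mem_Icc ⟨by linarith, hb2⟩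
  have hcab : Real.cos b ≤ Real.cos a :=
    Real.cos_le_cos_of_nonneg_of_le_pi ha.le (by linarith) hab.le
  have hcjab : Real.cos ((j : ℝ) * b) < Real.cos ((j : ℝ) * a) :=
    Real.cos_lt_cos_of_nonneg_of_le_pi hja0 hjb' hjab
  have e1 : Real.sin (((j : ℕ) + 1 : ℕ) * b)
      = Real.sin ((j : ℝ) * b) * Real.cos b + Real.cos ((j : ℝ) * b) * Real.sin b := by
    push_cast; rw [add_mul, one_mul, Real.sin_add]
  have e2 : Real.sin (((j : ℕ) + 1 : ℕ) * a)
      = Real.sin ((j : ℝ) * a) * Real.cos a + Real.cos ((j : ℝ) * a) * Real.sin a := by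
    push_cast; rw [add_mul, one_mul, Real.sin_add]
  push_cast
  push_cast at e1 e2
  rw [e1, e2]
  have t1 : Real.sin ((j : ℝ) * b) * Real.cos b * Real.sin a
      ≤ Real.sin ((j : ℝ) * a) * Real.cos a * Real.sin b := by
    linarith [mul_le_mul_of_nonneg_right ihh hcb,
      mul_le_mul_of_nonneg_left hcab (mul_nonneg hsja hsb.le)]
  have t2 : Real.cos ((j : ℝ) * b) * Real.sin b * Real.sin a
      < Real.cos ((j : ℝ) * a) * Real.sin a * Real.sin b := by
    linarith [mul_lt_mul_of_pos_right hcjab (mul_pos hsb hsa)]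
  calc (Real.sin ((j:ℝ)*b)*Real.cos b + Real.cos ((j:ℝ)*b)*Real.sin b) * Real.sin a
      = Real.sin ((j:ℝ)*b)*Real.cos b*Real.sin a
        + Real.cos ((j:ℝ)*b)*Real.sin b*Real.sin a := by ring
    _ < Real.sin ((j:ℝ)*a)*Real.cos a*Real.sin b
        + Real.cos ((j:ℝ)*a)*Real.sin a*Real.sin b := by linarith
    _ = (Real.sin ((j:ℝ)*a)*Real.cos a + Real.cos ((j:ℝ)*a)*Real.sin a) * Real.sin b := by
        ring

/-- For integers `N, m, r` with `2 ≤ r < m ≤ N/2`, the Chebyshev polynomials of the second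
kind satisfy `U_{m−1}(cos(π/N)) > |U_{m−1}(cos(πr/N))|`. -/
theorem chebyshevU_ineq (N m r : ℕ) (hr : 2 ≤ r) (hrm : r < m) (hmN : 2 * m ≤ N) :
    |(Polynomial.Chebyshev.U ℝ ((m : ℤ) - 1)).eval (Real.cos (Real.pi * r / N))| <
      (Polynomial.Chebyshev.U ℝ ((m : ℤ) - 1)).eval (Real.cos (Real.pi / N)) := by
  have hπ := Real.pi_pos
  have hm3 : 3 ≤ m := by omega
  have hN6 : 6 ≤ N := by omega
  have hNR : (0:ℝ) < (N:ℝ) := by positivity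
  have hMR : (3:ℝ) ≤ (m:ℝ) := by exact_mod_cast hm3
  have hRR : (2:ℝ) ≤ (r:ℝ) := by exact_mod_cast hr
  have hRM : (r:ℝ) + 1 ≤ (m:ℝ) := by exact_mod_cast hrm
  have h2M : 2 * (m:ℝ) ≤ (N:ℝ) := by exact_mod_cast hmN
  set a : ℝ := π / N with ha_def
  set b : ℝ := π * r / N with hb_def
  have ha : 0 < a := by positivity
  have hab : a < b := by
    rw [ha_def, hb_def, div_lt_div_iff₀ hNR hNR]
    nlinarith [mul_pos hπ hNR]
  have hb0 : 0 < b := ha.trans hab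
  have hma2 : (m:ℝ) * a ≤ π / 2 := by
    have e : (m:ℝ) * a = ((m:ℝ) * π) / N := by rw [ha_def]; ring
    rw [e, div_le_div_iff₀ hNR (by norm_num : (0:ℝ) < 2)]
    nlinarith
  have hbma : b < (m:ℝ) * a := by
    have e : (m:ℝ) * a = ((m:ℝ) * π) / N := by rw [ha_def]; ring
    rw [e, hb_def, div_lt_div_iff₀ hNR hNR]
    nlinarith [mul_pos hπ hNR]
  have hb2 : b ≤ π / 2 := hbma.le.trans hma2
  have hsa : 0 < Real.sin a := Real.sin_pos_of_pos_of_lt_pi ha (by linarith)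
  have hsb : 0 < Real.sin b := Real.sin_pos_of_pos_of_lt_pi hb0 (by linarith)
  have hsma : 0 < Real.sin ((m:ℝ) * a) :=
    Real.sin_pos_of_pos_of_lt_pi (by positivity) (by linarith)
  -- Chebyshev U evaluation identities
  have h1 : (Polynomial.Chebyshev.U ℝ ((m : ℤ) - 1)).eval (Real.cos a) * Real.sin a
      = Real.sin ((m:ℝ) * a) := by
    have := Polynomial.Chebyshev.U_real_cos a ((m : ℤ) - 1)
    rw [this]; push_cast; ring_nf
  have h2 : (Polynomial.Chebyshev.U ℝ ((m : ℤ) - 1)).eval (Real.cos b) * Real.sin b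
      = Real.sin ((m:ℝ) * b) := by
    have := Polynomial.Chebyshev.U_real_cos b ((m : ℤ) - 1)
    rw [this]; push_cast; ring_nf
  have hE1 : (Polynomial.Chebyshev.U ℝ ((m : ℤ) - 1)).eval (Real.cos a)
      = Real.sin ((m:ℝ) * a) / Real.sin a := by
    rw [eq_div_iff hsa.ne']; exact h1
  have hE2 : |(Polynomial.Chebyshev.U ℝ ((m : ℤ) - 1)).eval (Real.cos b)|
      = |Real.sin ((m:ℝ) * b)| / Real.sin b := by
    rw [← h2, abs_mul, abs_of_pos hsb, mul_div_assoc, div_self hsb.ne', mul_one]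
  have key : |Real.sin ((m:ℝ) * b)| * Real.sin a < Real.sin ((m:ℝ) * a) * Real.sin b := by
    by_cases hc : (m:ℝ) * b ≤ π
    · rw [abs_of_nonneg (Real.sin_nonneg_of_nonneg_of_le_pi (by positivity) hc)]
      exact sin_mul_div_strict_anti m (by omega) ha hab hb2 hc
    · push_neg at hc
      have hmR : (0:ℝ) < (m:ℝ) := by linarith
      have hpmb : π / (m:ℝ) < b := by rw [div_lt_iff₀ hmR]; nlinarith
      have hpm2 : π / (m:ℝ) ≤ π / 2 := by
        rw [div_le_div_iff₀ hmR (by norm_num : (0:ℝ) < 2)]; nlinarith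
      have hspm : Real.sin (π / (m:ℝ)) ≤ Real.sin b :=
        Real.sin_le_sin_of_le_of_le_pi_div_two
          (le_trans (by linarith : -(π/2) ≤ (0:ℝ)) (by positivity)) hb2 hpmb.le
      have s1 : 2 / π * ((m:ℝ) * a) ≤ Real.sin ((m:ℝ) * a) :=
        Real.mul_le_sin (by positivity) hma2
      have s2 : 2 / π * (π / (m:ℝ)) ≤ Real.sin (π / (m:ℝ)) :=
        Real.mul_le_sin (by positivity) hpm2
      have hq : (2 / π * ((m:ℝ) * a)) * (2 / π * (π / (m:ℝ))) = 4 / π * a := by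
        field_simp; ring
      have hC : 4 / π * a ≤ Real.sin ((m:ℝ) * a) * Real.sin (π / (m:ℝ)) := by
        rw [← hq]
        exact mul_le_mul s1 s2 (by positivity) hsma.le
      have hD : Real.sin ((m:ℝ) * a) * Real.sin (π / (m:ℝ))
          ≤ Real.sin ((m:ℝ) * a) * Real.sin b :=
        mul_le_mul_of_nonneg_left hspm hsma.le
      have hA : Real.sin a < a := Real.sin_lt ha
      have hB : a < 4 / π * a := by
        have h4 : (1:ℝ) < 4 / π := (one_lt_div hπ).2 (by linarith [Real.pi_lt_d2])
        have := mul_lt_mul_of_pos_right h4 ha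
        linarith [this, one_mul a]
      have habs : |Real.sin ((m:ℝ) * b)| ≤ 1 := by
        rw [abs_le]; exact ⟨Real.neg_one_le_sin _, Real.sin_le_one _⟩
      calc |Real.sin ((m:ℝ) * b)| * Real.sin a
          ≤ 1 * Real.sin a := mul_le_mul_of_nonneg_right habs hsa.le
        _ = Real.sin a := one_mul _
        _ < a := hA
        _ < 4 / π * a := hB
        _ ≤ Real.sin ((m:ℝ) * a) * Real.sin (π / (m:ℝ)) := hC
        _ ≤ Real.sin ((m:ℝ) * a) * Real.sin b := hD
  rw [hE1, hE2, div_lt_div_iff₀ hsb hsa]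
  exact key
end

section
/- For every integer N ≥ 1 and every real x with 0 < x < π/2, one has sin²x ≥ sin(π/N)·sin(Nx²/π). -/
open Real

/-!
With `a = π/N` and `b = Nx²/π` one has `ab = x²`. Since `u ↦ log (sin (exp u))` is concave on
`(-∞, log π)` (its second derivative has the sign of `sin t cos t - t < 0`, `t = exp u`),
`sin a sin b ≤ sin² √(ab) = sin² x` whenever `b ≤ π`. If `b > π`, then `πa ≤ x²`, and
`sin a sin b ≤ a ≤ x²/π ≤ (2x/π)² ≤ sin² x` by `π ≤ 4` and Jordan's inequality.
-/

lemma sin_mul_cos_lt_self {t : ℝ} (ht : 0 < t) : sin t * cos t < t := by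
  have h := sin_lt (by positivity : 0 < 2 * t)
  rw [sin_two_mul] at h
  linarith

lemma concaveOn_log_sin_exp : ConcaveOn ℝ (Set.Iio (log π)) (fun u => log (sin (exp u))) := by
  have sin_exp_pos : ∀ u ∈ interior (Set.Iio (log π)), 0 < sin (exp u) := fun u hu => by
    rw [interior_Iio, Set.mem_Iio, ← exp_lt_exp, exp_log pi_pos] at hu
    exact sin_pos_of_pos_of_lt_pi (exp_pos u) hu
  have hsin (u : ℝ) : HasDerivAt (fun u => sin (exp u)) (cos (exp u) * exp u) u :=
    (hasDerivAt_sin _).comp u (hasDerivAt_exp u)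
  have hcos (u : ℝ) : HasDerivAt (fun u => cos (exp u)) (-sin (exp u) * exp u) u :=
    (hasDerivAt_cos _).comp u (hasDerivAt_exp u)
  refine concaveOn_of_hasDerivWithinAt2_nonpos (convex_Iio _)
    (f' := fun u => exp u * cos (exp u) / sin (exp u))
    (f'' := fun u => exp u * (sin (exp u) * cos (exp u) - exp u) / sin (exp u) ^ 2)
    ?_ (fun u hu => ?_) (fun u hu => ?_) (fun u hu => ?_)
  · intro u hu
    rw [← interior_Iio] at hu
    exact (continuous_sin.comp continuous_exp).continuousWithinAt.log (sin_exp_pos u hu).ne'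
  · have h : HasDerivAt (fun u => log (sin (exp u))) (exp u * cos (exp u) / sin (exp u)) u :=
      ((hsin u).log (sin_exp_pos u hu).ne').congr_deriv (by ring)
    exact h.hasDerivWithinAt
  · have h : HasDerivAt (fun u => exp u * cos (exp u) / sin (exp u))
        (exp u * (sin (exp u) * cos (exp u) - exp u) / sin (exp u) ^ 2) u := by
      have hnum : HasDerivAt (fun u => exp u * cos (exp u))
          (exp u * cos (exp u) + exp u * (-sin (exp u) * exp u)) u :=
        (hasDerivAt_exp u).mul (hcos u)
      refine (hnum.div (hsin u) (sin_exp_pos u hu).ne').congr_deriv ?_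
      rw [div_left_inj' (pow_ne_zero 2 (sin_exp_pos u hu).ne')]
      linear_combination -exp u ^ 2 * sin_sq_add_cos_sq (exp u)
    exact h.hasDerivWithinAt
  · have hnum := sub_nonpos.2 (sin_mul_cos_lt_self (exp_pos u)).le
    exact div_nonpos_of_nonpos_of_nonneg (mul_nonpos_of_nonneg_of_nonpos (exp_pos u).le hnum)
      (sq_nonneg _)

lemma sin_mul_sin_le_sin_sqrt_mul_sq {a b : ℝ} (ha : 0 ≤ a) (ha' : a ≤ π) (hb : 0 ≤ b)
    (hb' : b ≤ π) : sin a * sin b ≤ sin √(a * b) ^ 2 := by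
  rcases ha.eq_or_lt with rfl | ha
  · simp
  rcases hb.eq_or_lt with rfl | hb
  · simp
  rcases ha'.eq_or_lt with rfl | ha'
  · simpa using sq_nonneg _
  rcases hb'.eq_or_lt with rfl | hb'
  · simpa using sq_nonneg _
  have hab : 0 < a * b := mul_pos ha hb
  have hmid : (1 / 2 : ℝ) • log a + (1 / 2 : ℝ) • log b = log √(a * b) := by
    rw [log_sqrt hab.le, log_mul ha.ne' hb.ne', smul_eq_mul, smul_eq_mul]
    ring
  have h := concaveOn_log_sin_exp.2 (log_lt_log ha ha') (log_lt_log hb hb')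
    (by norm_num : (0 : ℝ) ≤ 1 / 2) (by norm_num : (0 : ℝ) ≤ 1 / 2) (by norm_num)
  rw [hmid] at h
  simp only [exp_log ha, exp_log hb, exp_log (sqrt_pos.2 hab), smul_eq_mul] at h
  have hsa := sin_pos_of_pos_of_lt_pi ha ha'
  have hsb := sin_pos_of_pos_of_lt_pi hb hb'
  have hs : 0 < sin √(a * b) := sin_pos_of_pos_of_lt_pi (sqrt_pos.2 hab)
    ((sqrt_lt' pi_pos).2 (by nlinarith))
  rw [← log_le_log_iff (by positivity) (by positivity), log_mul hsa.ne' hsb.ne', log_pow]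
  push_cast
  linarith

lemma sin_mul_sin_le_sin_sq_of_pi_mul_le {a b x : ℝ} (ha : 0 ≤ a) (hx : 0 ≤ x) (hx' : x ≤ π / 2)
    (h : π * a ≤ x ^ 2) : sin a * sin b ≤ sin x ^ 2 :=
  calc sin a * sin b ≤ |sin a| * |sin b| := (le_abs_self _).trans (abs_mul _ _).le
    _ ≤ |a| * 1 := mul_le_mul abs_sin_le_abs (abs_sin_le_one b) (abs_nonneg _) (abs_nonneg _)
    _ = a := by rw [mul_one, abs_of_nonneg ha]
    _ ≤ (2 / π * x) ^ 2 := by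
        rw [mul_pow, div_pow, div_mul_eq_mul_div, le_div_iff₀ (by positivity)]
        nlinarith [pi_le_four, pi_pos]
    _ ≤ sin x ^ 2 := pow_le_pow_left₀ (by positivity) (mul_le_sin hx hx') 2

/-- For every integer `N ≥ 1` and every real `x` with `0 < x < π/2`, one has
`sin²x ≥ sin(π/N)·sin(Nx²/π)`. -/
theorem sin_sq_ge (N : ℕ) (hN : 1 ≤ N) (x : ℝ) (hx : 0 < x) (hx' : x < Real.pi / 2) :
    Real.sin (Real.pi / N) * Real.sin (N * x ^ 2 / Real.pi) ≤ Real.sin x ^ 2 := by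
  have hN' : (1 : ℝ) ≤ N := by exact_mod_cast hN
  have hab : π / N * (N * x ^ 2 / π) = x ^ 2 := by field_simp
  have ha : 0 ≤ π / N := by positivity
  rcases le_or_gt (N * x ^ 2 / π) π with hb | hb
  · have ha' : π / N ≤ π := div_le_self pi_pos.le hN'
    have h := sin_mul_sin_le_sin_sqrt_mul_sq ha ha' (by positivity) hb
    rwa [hab, sqrt_sq hx.le] at h
  · refine sin_mul_sin_le_sin_sq_of_pi_mul_le ha hx.le hx'.le ?_
    rw [← hab, mul_comm π]
    exact mul_le_mul_of_nonneg_left hb.le ha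
end

section
/- Let N ≥ 3 and let m be an integer with 2 ≤ m ≤ ⌊N/2⌋, and set σ_m = sin²(πm/N)/sin²(π/N). Then for every ξ : ℤ/Nℤ → ℝ one has ∑_{j=1}^N (ξ_j − ξ_{j+m})² ≤ σ_m ∑_{j=1}^N (ξ_j − ξ_{j+1})², i.e. the quadratic form S_m[ξ] = ∑_j { (ξ_j − ξ_{j+m})² − σ_m (ξ_j − ξ_{j+1})² } on ℝ^N is negative semidefinite. -/
/-!
Writing `ξ̂` for the discrete Fourier transform of `ξ`, Parseval's identity and the shift rule
`(ξ(· + k))^ r = e(kr/N) ξ̂ r` give, for every shift `k`,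
`N ∑_j (ξ_j - ξ_{j+k})² = ∑_r 4 sin²(π k r / N) |ξ̂ r|²`.
The theorem therefore reduces to the multiplier inequality
`|sin(π m r / N)| sin(π / N) ≤ sin(π m / N) |sin(π r / N)|`, where by symmetry `0 < r ≤ N / 2`.
With `x = π r / N`: while `m x ≤ π`, the ratio `sin (m x) / sin x` decreases in `x`; once `m x > π`,
we have `x > π / m`, and Jordan's inequality `sin y ≥ 2y/π` bounds `sin(π m / N) sin x` below by
`(2m / N)(2 / m) = 4 / N > sin(π / N)`, which dominates the left-hand side as `|sin (m x)| ≤ 1`.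
-/

open Real Finset ComplexConjugate

namespace Real

lemma sin_nat_mul_mul_sin_le (n : ℕ) {a b : ℝ} (ha : 0 ≤ a) (hab : a ≤ b) (hb : b ≤ π / 2)
    (hnb : n * b ≤ π) : sin (n * b) * sin a ≤ sin (n * a) * sin b := by
  induction n with
  | zero => simp
  | succ k ih =>
    push_cast at hnb ⊢
    have hkb : k * b ≤ π := by nlinarith
    have hka : k * a ≤ k * b := by gcongr
    have hcos : cos b ≤ cos a := cos_le_cos_of_nonneg_of_le_pi ha (by linarith [pi_pos]) hab
    have hcosk : cos (k * b) ≤ cos (k * a) :=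
      cos_le_cos_of_nonneg_of_le_pi (by positivity) hkb hka
    have hcosb : 0 ≤ cos b := cos_nonneg_of_mem_Icc ⟨by linarith [pi_pos], hb⟩
    have hsa : 0 ≤ sin a := sin_nonneg_of_nonneg_of_le_pi ha (by linarith [pi_pos])
    have hsb : 0 ≤ sin b := sin_nonneg_of_nonneg_of_le_pi (ha.trans hab) (by linarith [pi_pos])
    have hska : 0 ≤ sin (k * a) := sin_nonneg_of_nonneg_of_le_pi (by positivity) (hka.trans hkb)
    simp only [add_mul, one_mul, sin_add]
    linarith [mul_le_mul_of_nonneg_right (ih hkb) hcosb,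
      mul_le_mul_of_nonneg_right hcos (mul_nonneg hska hsb),
      mul_le_mul_of_nonneg_right hcosk (mul_nonneg hsa hsb)]

lemma sin_pi_div_le_sin_mul_sin {m N : ℕ} (hmN : 2 * m ≤ N) {x : ℝ} (hmx : π < m * x)
    (hx : x ≤ π / 2) : sin (π / N) ≤ sin (π * m / N) * sin x := by
  have hm : (2 : ℝ) < m := by nlinarith [pi_pos, (Nat.cast_nonneg m : (0 : ℝ) ≤ m)]
  have hN : (2 * m : ℝ) ≤ N := by exact_mod_cast hmN
  have hpi_m : 0 < π / m := by positivity
  have hsin_x : 2 / m ≤ sin x :=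
    calc 2 / m = 2 / π * (π / m) := by field_simp
      _ ≤ sin (π / m) := mul_le_sin (by positivity) (by gcongr)
      _ ≤ sin x := sin_le_sin_of_le_of_le_pi_div_two (by linarith [hpi_m, pi_pos]) hx
          ((div_le_iff₀ (by linarith)).2 (by linarith))
  have hsin_m : 2 * m / N ≤ sin (π * m / N) :=
    calc (2 * m / N : ℝ) = 2 / π * (π * m / N) := by field_simp
      _ ≤ _ := mul_le_sin (by positivity)
          (by rw [div_le_div_iff₀ (by linarith) two_pos]; nlinarith [pi_pos])
  calc sin (π / N) ≤ π / N := sin_le (by positivity)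
    _ ≤ 4 / N := by gcongr; exact pi_le_four
    _ = 2 * m / N * (2 / m) := by field_simp; ring
    _ ≤ sin (π * m / N) * sin x :=
      mul_le_mul hsin_m hsin_x (by positivity) ((by positivity : (0:ℝ) ≤ 2 * m / N).trans hsin_m)

lemma abs_sin_nat_mul_mul_sin_le {m N : ℕ} (hmN : 2 * m ≤ N) {x : ℝ} (hx₀ : π / N ≤ x)
    (hx : x ≤ π / 2) : |sin (m * x)| * sin (π / N) ≤ sin (π * m / N) * sin x := by
  have hpiN : 0 ≤ π / N := by positivity
  rcases le_or_gt (m * x) π with hmx | hmx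
  · rw [abs_of_nonneg (sin_nonneg_of_nonneg_of_le_pi (by positivity [hpiN.trans hx₀]) hmx),
      show π * m / N = m * (π / N) by ring]
    exact sin_nat_mul_mul_sin_le m hpiN hx₀ hx hmx
  · have hN : (1 : ℝ) ≤ N := by
      have : (2 * m : ℝ) ≤ N := by exact_mod_cast hmN
      nlinarith [pi_pos, (Nat.cast_nonneg m : (0 : ℝ) ≤ m)]
    have hsin : 0 ≤ sin (π / N) := sin_nonneg_of_nonneg_of_le_pi hpiN (div_le_self pi_pos.le hN)
    calc |sin (m * x)| * sin (π / N) ≤ 1 * sin (π / N) := by gcongr; exact abs_sin_le_one _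
      _ ≤ _ := by rw [one_mul]; exact sin_pi_div_le_sin_mul_sin hmN hmx hx

lemma abs_sin_pi_mul_mul_div_mul_sin_le {m N n : ℕ} (hmN : 2 * m ≤ N) (hn : 2 * n ≤ N) :
    |sin (π * m * n / N)| * sin (π / N) ≤ sin (π * m / N) * |sin (π * n / N)| := by
  rcases Nat.eq_zero_or_pos n with rfl | hn₀
  · simp
  have hN : (0 : ℝ) < N := by exact_mod_cast (by omega : 0 < N)
  have hx₀ : π / N ≤ π * n / N := by
    gcongr; exact le_mul_of_one_le_right pi_pos.le (by exact_mod_cast hn₀)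
  have hx : π * n / N ≤ π / 2 := by
    rw [div_le_div_iff₀ hN two_pos]
    nlinarith [mul_le_mul_of_nonneg_left (by exact_mod_cast hn : (2 * n : ℝ) ≤ N) pi_pos.le]
  rw [abs_of_nonneg (sin_nonneg_of_nonneg_of_le_pi (x := π * n / N) (by positivity)
      (by linarith [pi_pos])),
    show π * m * n / N = m * (π * n / N) by ring]
  exact abs_sin_nat_mul_mul_sin_le hmN hx₀ hx

end Real

namespace ZMod

variable {N : ℕ} [NeZero N]

lemma dft_comp_add_right {E : Type*} [AddCommGroup E] [Module ℂ E] (Φ : ZMod N → E)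
    (k r : ZMod N) : 𝓕 (fun j ↦ Φ (j + k)) r = stdAddChar (k * r) • 𝓕 Φ r := by
  simp only [dft_apply, smul_sum, smul_smul]
  refine Fintype.sum_equiv (Equiv.addRight k) _ _ fun j ↦ ?_
  rw [Equiv.coe_addRight, ← AddChar.map_add_eq_mul]
  congr 2
  ring

lemma sum_norm_sq_dft (Φ : ZMod N → ℂ) : ∑ r, ‖𝓕 Φ r‖ ^ 2 = N * ∑ j, ‖Φ j‖ ^ 2 := by
  have conj_dft (r : ZMod N) : conj (𝓕 Φ r) = ∑ j, stdAddChar (-(r * -j)) * conj (Φ j) := by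
    simp only [dft_apply, smul_eq_mul, map_sum, map_mul, ← AddChar.map_neg_eq_conj]
    exact sum_congr rfl fun j _ ↦ by ring_nf
  have dft_dft_apply (j : ZMod N) : ∑ r, stdAddChar (-(r * -j)) * 𝓕 Φ r = N * Φ j := by
    simpa [dft_apply] using congrFun (dft_dft Φ) (-j)
  have h : ∑ r, 𝓕 Φ r * conj (𝓕 Φ r) = N * ∑ j, Φ j * conj (Φ j) :=
    calc ∑ r, 𝓕 Φ r * conj (𝓕 Φ r)
        = ∑ j, conj (Φ j) * ∑ r, stdAddChar (-(r * -j)) * 𝓕 Φ r := by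
          simp_rw [conj_dft, mul_sum]
          rw [sum_comm]
          exact sum_congr rfl fun j _ ↦ sum_congr rfl fun r _ ↦ by ring
      _ = N * ∑ j, Φ j * conj (Φ j) := by
          simp_rw [dft_dft_apply, mul_sum]
          exact sum_congr rfl fun j _ ↦ by ring
  simp only [Complex.mul_conj'] at h
  exact_mod_cast h

lemma mul_sum_sq_sub_comp_add (ξ : ZMod N → ℝ) (k : ZMod N) :
    N * ∑ j, (ξ j - ξ (j + k)) ^ 2 =
      ∑ r, ‖1 - stdAddChar (k * r)‖ ^ 2 * ‖𝓕 (fun j ↦ (ξ j : ℂ)) r‖ ^ 2 := by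
  set Φ : ZMod N → ℂ := fun j ↦ ξ j
  have dft_sub (r : ZMod N) :
      𝓕 (Φ - fun j ↦ Φ (j + k)) r = (1 - stdAddChar (k * r)) * 𝓕 Φ r := by
    rw [map_sub, Pi.sub_apply, dft_comp_add_right, smul_eq_mul]
    ring
  calc (N : ℝ) * ∑ j, (ξ j - ξ (j + k)) ^ 2
      = N * ∑ j, ‖(Φ - fun j ↦ Φ (j + k)) j‖ ^ 2 := by
        simp only [Φ, Pi.sub_apply, ← Complex.ofReal_sub, Complex.norm_real, Real.norm_eq_abs,
          sq_abs]
    _ = ∑ r, ‖𝓕 (Φ - fun j ↦ Φ (j + k)) r‖ ^ 2 := (sum_norm_sq_dft _).symm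
    _ = _ := by simp only [dft_sub, norm_mul, mul_pow]

lemma norm_one_sub_stdAddChar_neg (t : ZMod N) :
    ‖1 - stdAddChar (-t)‖ = ‖1 - stdAddChar t‖ := by
  rw [AddChar.map_neg_eq_conj, ← Complex.norm_conj, map_sub, map_one, Complex.conj_conj]

lemma norm_one_sub_stdAddChar_natCast (n : ℕ) :
    ‖1 - stdAddChar (n : ZMod N)‖ = 2 * |sin (π * n / N)| := by
  rw [← Int.cast_natCast, stdAddChar_coe, norm_sub_rev,
    show 2 * π * Complex.I * (n : ℤ) / N = Complex.I * ((2 * π * n / N : ℝ) : ℂ) by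
      push_cast; ring,
    Complex.norm_exp_I_mul_ofReal_sub_one, norm_mul, Real.norm_eq_abs, Real.norm_eq_abs]
  norm_num
  ring_nf

lemma norm_one_sub_stdAddChar_mul_le {m : ℕ} (hmN : 2 * m ≤ N) (r : ZMod N) :
    ‖1 - stdAddChar ((m : ZMod N) * r)‖ * sin (π / N) ≤
      sin (π * m / N) * ‖1 - stdAddChar r‖ := by
  obtain ⟨n, hn, hr⟩ : ∃ n : ℕ, 2 * n ≤ N ∧ (r = n ∨ r = -n) := by
    refine ⟨r.valMinAbs.natAbs, by have := r.natAbs_valMinAbs_le; omega, ?_⟩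
    have hr := r.coe_valMinAbs
    rcases Int.natAbs_eq r.valMinAbs with h | h <;> rw [h] at hr <;>
      simp only [Int.cast_natCast, Int.cast_neg] at hr
    exacts [Or.inl hr.symm, Or.inr hr.symm]
  have key : ‖1 - stdAddChar ((m : ZMod N) * (n : ZMod N))‖ * sin (π / N) ≤
      sin (π * m / N) * ‖1 - stdAddChar (n : ZMod N)‖ := by
    rw [← Nat.cast_mul, norm_one_sub_stdAddChar_natCast, norm_one_sub_stdAddChar_natCast]
    have := abs_sin_pi_mul_mul_div_mul_sin_le hmN hn
    push_cast
    rw [mul_assoc π] at this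
    linarith
  rcases hr with rfl | rfl
  · exact key
  · rwa [mul_neg, norm_one_sub_stdAddChar_neg, norm_one_sub_stdAddChar_neg]

end ZMod

open ZMod

theorem circulant_form_negSemidef_general (N : ℕ) [NeZero N] (hN : 3 ≤ N) (m : ℕ)
    (hmN : m ≤ N / 2) (ξ : ZMod N → ℝ) :
    ∑ j : ZMod N, (ξ j - ξ (j + (m : ZMod N))) ^ 2 ≤
      (Real.sin (Real.pi * m / N) ^ 2 / Real.sin (Real.pi / N) ^ 2) *
        ∑ j : ZMod N, (ξ j - ξ (j + 1)) ^ 2 := by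
  have hsin : 0 < sin (π / N) := by
    have : (1 : ℝ) < N := by exact_mod_cast (by omega : 1 < N)
    exact sin_pos_of_pos_of_lt_pi (by positivity) (div_lt_self pi_pos this)
  have hsum : (N * ∑ j, (ξ j - ξ (j + m)) ^ 2) * sin (π / N) ^ 2 ≤
      sin (π * m / N) ^ 2 * (N * ∑ j, (ξ j - ξ (j + 1)) ^ 2) := by
    rw [mul_sum_sq_sub_comp_add, mul_sum_sq_sub_comp_add, sum_mul, mul_sum]
    refine sum_le_sum fun r _ ↦ ?_
    have hr := mul_le_mul_of_nonneg_right
      (pow_le_pow_left₀ (by positivity) (norm_one_sub_stdAddChar_mul_le (m := m) (by omega) r) 2)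
      (sq_nonneg ‖𝓕 (fun j ↦ (ξ j : ℂ)) r‖)
    rw [one_mul]
    linarith
  have hN0 : (0 : ℝ) < N := by exact_mod_cast Nat.pos_of_neZero N
  rw [div_mul_eq_mul_div, le_div_iff₀ (by positivity)]
  exact le_of_mul_le_mul_left (by linarith) hN0

/-- Let `N ≥ 3`, `2 ≤ m ≤ ⌊N/2⌋`, and `σ_m = sin²(πm/N)/sin²(π/N)`. Then for every
cyclically indexed `ξ : ℤ/Nℤ → ℝ`,
`∑_j (ξ_j − ξ_{j+m})² ≤ σ_m ∑_j (ξ_j − ξ_{j+1})²`,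
i.e. the circulant quadratic form `S_m` is negative semidefinite. -/
theorem circulant_form_negSemidef (N : ℕ) [NeZero N] (hN : 3 ≤ N) (m : ℕ)
    (hm : 2 ≤ m) (hmN : m ≤ N / 2) (ξ : ZMod N → ℝ) :
    ∑ j : ZMod N, (ξ j - ξ (j + (m : ZMod N))) ^ 2 ≤
      (Real.sin (Real.pi * m / N) ^ 2 / Real.sin (Real.pi / N) ^ 2) *
        ∑ j : ZMod N, (ξ j - ξ (j + 1)) ^ 2 :=
  circulant_form_negSemidef_general N hN m hmN ξ
end

section
/- Let N ≥ 3, ℓ > 0, let 2 ≤ m ≤ ⌊N/2⌋, and let ỹ_j = R(cos(2πj/N), sin(2πj/N)) with R = ℓ(2 sin(π/N))^{−1} be the regular N-gon with edge length ℓ in ℝ². Then for every j, (ỹ_j − ỹ_{j+m})/|ỹ_j − ỹ_{j+m}| + (ỹ_j − ỹ_{j−m})/|ỹ_j − ỹ_{j−m}| = (Υ_m/ℓ)·(2ỹ_j − ỹ_{j+1} − ỹ_{j−1}), where Υ_m = sin(πm/N)/sin(π/N). In particular, the regular polygon is a critical point of the total m-diagonal length under the equilaterality constraints, with all Lagrange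 multipliers equal to σ_m/(NΥ_m), σ_m = sin²(πm/N)/sin²(π/N). -/
open Real

/-! The vertices lie on the circle of radius `R` at angles `θ_j = 2πj/N`. A chord of that circle
spanning the angle `δ` has length `2R sin(δ/2)`, and the symmetric second difference
`2p(θ) - p(θ + δ) - p(θ - δ) = 4 sin²(δ/2) p(θ)` is radial. Hence both sides of the identity are
multiples of `ỹ_j`: the left one by `4 sin²(πm/N) / (2R sin(πm/N))`, the right one by
`Υ_m · 4 sin²(π/N) / ℓ`, and these agree because `ℓ = 2R sin(π/N)`. -/

noncomputable def polarPoint (R θ : ℝ) : EuclideanSpace ℝ (Fin 2) :=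
  !₂[R * cos θ, R * sin θ]

lemma polarPoint_sub_int_mul_two_pi (R θ : ℝ) (n : ℤ) :
    polarPoint R (θ - n * (2 * π)) = polarPoint R θ := by
  rw [polarPoint, polarPoint, cos_sub_int_mul_two_pi, sin_sub_int_mul_two_pi]

lemma cos_eq_one_sub_two_mul_sin_half_sq (x : ℝ) : cos x = 1 - 2 * sin (x / 2) ^ 2 := by
  rw [← cos_two_mul_eq_one_sub, mul_div_cancel₀ x two_ne_zero]

lemma norm_polarPoint_sub (R θ φ : ℝ) :
    ‖polarPoint R θ - polarPoint R φ‖ = 2 * |R| * |sin ((θ - φ) / 2)| := by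
  have hcos := cos_eq_one_sub_two_mul_sin_half_sq (θ - φ)
  rw [cos_sub] at hcos
  rw [EuclideanSpace.norm_eq, ← sqrt_sq (by positivity : 0 ≤ 2 * |R| * |sin ((θ - φ) / 2)|)]
  congr 1
  simp only [polarPoint, Fin.sum_univ_two, PiLp.sub_apply, Matrix.cons_val_zero,
    Matrix.cons_val_one, norm_eq_abs, sq_abs, mul_pow]
  linear_combination R ^ 2 * sin_sq_add_cos_sq θ + R ^ 2 * sin_sq_add_cos_sq φ - 2 * R ^ 2 * hcos

lemma two_nsmul_polarPoint_sub_sub (R θ δ : ℝ) :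
    2 • polarPoint R θ - polarPoint R (θ + δ) - polarPoint R (θ - δ) =
      (4 * sin (δ / 2) ^ 2) • polarPoint R θ := by
  have hcos := cos_eq_one_sub_two_mul_sin_half_sq δ
  ext i
  fin_cases i <;>
  · simp only [polarPoint, Fin.zero_eta, Fin.mk_one, Fin.isValue, PiLp.sub_apply,
      PiLp.smul_apply, Matrix.cons_val_zero, Matrix.cons_val_one, Matrix.cons_val_fin_one,
      nsmul_eq_mul, Nat.cast_ofNat, smul_eq_mul, cos_add, sin_add, cos_sub, sin_sub, hcos]
    ring

lemma sin_pi_mul_div_pos {m N : ℕ} (hm : 0 < m) (hmN : m < N) : 0 < sin (π * m / N) := by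
  have hN : (0 : ℝ) < N := by exact_mod_cast hm.trans hmN
  refine sin_pos_of_pos_of_lt_pi (by positivity) ?_
  rw [div_lt_iff₀ hN, mul_lt_mul_iff_right₀ pi_pos]
  exact_mod_cast hmN

lemma regularNGon_add_intCast (N : ℕ) [NeZero N] (ℓ : ℝ) (j : ZMod N) (k : ℤ) :
    regularNGon N ℓ (j + k) =
      polarPoint (ℓ / (2 * sin (π / N))) (2 * π * j.val / N + k * (2 * π / N)) := by
  have hN : (N : ℝ) ≠ 0 := NeZero.ne _
  have hval : (((j + k : ZMod N).val : ℤ)) = j.val + k - N * ((j.val + k) / N) := by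
    rw [← Int.emod_def, ← ZMod.val_intCast]
    push_cast [ZMod.natCast_val, ZMod.cast_id]
    rfl
  have hvalℝ : (((j + k : ZMod N).val : ℝ)) = j.val + k - N * (((j.val + k) / N : ℤ) : ℝ) := by
    exact_mod_cast hval
  rw [← polarPoint_sub_int_mul_two_pi _ _ ((j.val + k) / N)]
  show polarPoint _ _ = _
  congr 1
  rw [hvalℝ]
  field_simp

lemma regularNGon_add_natCast (N : ℕ) [NeZero N] (ℓ : ℝ) (j : ZMod N) (n : ℕ) :
    regularNGon N ℓ (j + n) =
      polarPoint (ℓ / (2 * sin (π / N))) (2 * π * j.val / N + n * (2 * π / N)) := by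
  simpa using regularNGon_add_intCast N ℓ j n

lemma regularNGon_sub_natCast (N : ℕ) [NeZero N] (ℓ : ℝ) (j : ZMod N) (n : ℕ) :
    regularNGon N ℓ (j - n) =
      polarPoint (ℓ / (2 * sin (π / N))) (2 * π * j.val / N - n * (2 * π / N)) := by
  simpa [sub_eq_add_neg] using regularNGon_add_intCast N ℓ j (-n)

/-- Criticality of the regular polygon: for `2 ≤ m ≤ ⌊N/2⌋` and every vertex `j`,
`(ỹ_j − ỹ_{j+m})/|ỹ_j − ỹ_{j+m}| + (ỹ_j − ỹ_{j−m})/|ỹ_j − ỹ_{j−m}|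
  = (Υ_m/ℓ)·(2ỹ_j − ỹ_{j+1} − ỹ_{j−1})` with `Υ_m = sin(πm/N)/sin(π/N)`.
Hence the regular polygon is a critical point of the total `m`-diagonal length under the
equilaterality constraints, with all Lagrange multipliers equal to
`σ_m/(NΥ_m)`, `σ_m = sin²(πm/N)/sin²(π/N)`. -/
theorem regularNGon_critical (N : ℕ) [NeZero N] (hN : 3 ≤ N) (ℓ : ℝ) (hℓ : 0 < ℓ)
    (m : ℕ) (hm : 2 ≤ m) (hmN : m ≤ N / 2) (j : ZMod N) :
    ‖regularNGon N ℓ j - regularNGon N ℓ (j + (m : ZMod N))‖⁻¹ •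
        (regularNGon N ℓ j - regularNGon N ℓ (j + (m : ZMod N))) +
      ‖regularNGon N ℓ j - regularNGon N ℓ (j - (m : ZMod N))‖⁻¹ •
        (regularNGon N ℓ j - regularNGon N ℓ (j - (m : ZMod N))) =
      (Real.sin (Real.pi * m / N) / Real.sin (Real.pi / N) / ℓ) •
        (2 • regularNGon N ℓ j - regularNGon N ℓ (j + 1) - regularNGon N ℓ (j - 1)) := by
  have hsin₁ : 0 < sin (π / N) := by
    simpa using sin_pi_mul_div_pos (m := 1) one_pos (by omega)
  have hsinₘ : 0 < sin (π * m / N) := sin_pi_mul_div_pos (by omega) (by omega)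
  have hadd := regularNGon_add_natCast N ℓ j m
  have hsub := regularNGon_sub_natCast N ℓ j m
  have hnext := regularNGon_add_natCast N ℓ j 1
  have hprev := regularNGon_sub_natCast N ℓ j 1
  rw [Nat.cast_one, Nat.cast_one, one_mul] at hnext hprev
  set R := ℓ / (2 * sin (π / N)) with hR_def
  have hR : 0 < R := by positivity
  set θ := 2 * π * j.val / N
  set α := 2 * π / N
  have hj : regularNGon N ℓ j = polarPoint R θ := rfl
  have hhalf_add : (θ - (θ + m * α)) / 2 = -(π * m / N) := by ring
  have hhalf_sub : (θ - (θ - m * α)) / 2 = π * m / N := by ring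
  calc _ = (2 * R * sin (π * m / N))⁻¹ •
        (2 • polarPoint R θ - polarPoint R (θ + m * α) - polarPoint R (θ - m * α)) := by
        rw [hj, hadd, hsub, norm_polarPoint_sub, norm_polarPoint_sub, hhalf_add, hhalf_sub,
          sin_neg, abs_neg, abs_of_pos hR, abs_of_pos hsinₘ, ← smul_add, two_nsmul]
        abel_nf
    _ = _ := by
        rw [hj, hnext, hprev, two_nsmul_polarPoint_sub_sub, two_nsmul_polarPoint_sub_sub,
          smul_smul, smul_smul, show m * α / 2 = π * m / N by ring, show α / 2 = π / N by ring]
        congr 1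
        rw [hR_def]
        field_simp
end
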